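/- arXiv:2309.10762 — 2 statements merged into one kernel-verified Lean document; each statement's English description precedes it below -/
import Mathlib

section
/- The sign-vector set of a hyperplane arrangement restricted to a chamber of a subarrangement yields a system satisfying face symmetry: let A be a finite set of affine hyperplanes in ℝⁿ, let K ⊆ ℝⁿ be an open convex set, and let L = {σ_A(v) : v ∈ K}, where σ_A(v) ∈ {-1,0,1}^A records the side of each hyperplane that v lies on. Then L satisfies (FS): for all X, Y ∈ L, X ∘ (−Y) ∈ L. -/
/-!
Move from `v` slightly away from `w`, to `v + t • (v - w)` with `t > 0` small. Along this ray each
affine functional is `h(v) + t (h(v) - h(w))`: it keeps the sign of `h(v)` when that is nonzero and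
takes the sign of `-h(w)` when `h(v) = 0`, which is exactly `σ(v) ∘ (-σ(w))`. As `K` is open, the
point stays in `K` for small `t`.
-/

/-- Composition of sign vectors. -/
def comp {A : Type*} (X Y : A → SignType) : A → SignType := fun e => if X e = 0 then Y e else X e

/-- Sign map of an arrangement given by affine functionals h_H(x) = ⟨a_H, x⟩ − b_H. -/
noncomputable def sigma {n : ℕ} {A : Type*} (a : A → (Fin n → ℝ)) (b : A → ℝ)
    (v : Fin n → ℝ) : A → SignType :=
  fun H => SignType.sign (∑ i, a H i * v i - b H)

open Filter Topology

theorem eventually_sign_add_mul (α γ : ℝ) :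
    ∀ᶠ t in 𝓝[>] 0,
      SignType.sign (α + t * γ) = if α = 0 then SignType.sign γ else SignType.sign α := by
  by_cases hα : α = 0
  · filter_upwards [self_mem_nhdsWithin] with t (ht : 0 < t)
    simp [hα, sign_mul, sign_pos ht]
  · have hline : Tendsto (fun t : ℝ => α + t * γ) (𝓝[>] 0) (𝓝 α) := by
      have hc : Continuous fun t : ℝ => α + t * γ := by fun_prop
      simpa using (hc.tendsto 0).mono_left nhdsWithin_le_nhds
    have hsign := (continuousAt_sign_of_ne_zero hα).tendsto.comp hline
    rw [nhds_discrete, tendsto_pure] at hsign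
    simpa [hα] using hsign

theorem sum_mul_add_smul_sub_sub {n : ℕ} (c : Fin n → ℝ) (β t : ℝ) (v w : Fin n → ℝ) :
    ∑ i, c i * (v + t • (v - w)) i - β =
      (∑ i, c i * v i - β) + t * ((∑ i, c i * v i - β) - (∑ i, c i * w i - β)) := by
  change c ⬝ᵥ (v + t • (v - w)) - β = (c ⬝ᵥ v - β) + t * ((c ⬝ᵥ v - β) - (c ⬝ᵥ w - β))
  simp only [dotProduct_add, dotProduct_smul, dotProduct_sub, smul_eq_mul]
  ring

theorem eventually_sigma_add_smul_sub {n : ℕ} {A : Type*} [Finite A]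
    (a : A → (Fin n → ℝ)) (b : A → ℝ) (v w : Fin n → ℝ) :
    ∀ᶠ t : ℝ in 𝓝[>] 0, sigma a b (v + t • (v - w)) = comp (sigma a b v) (-sigma a b w) := by
  have hH : ∀ H, ∀ᶠ t : ℝ in 𝓝[>] 0,
      sigma a b (v + t • (v - w)) H = comp (sigma a b v) (-sigma a b w) H := by
    intro H
    filter_upwards [eventually_sign_add_mul (∑ i, a H i * v i - b H)
      ((∑ i, a H i * v i - b H) - (∑ i, a H i * w i - b H))] with t ht
    rw [sigma, sum_mul_add_smul_sub_sub, ht]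
    by_cases h0 : ∑ i, a H i * v i - b H = 0
    · simp [comp, sigma, h0, ← Left.sign_neg]
    · simp [comp, sigma, h0]
  filter_upwards [eventually_all.2 hH] with t ht
  exact funext ht

theorem realizable_FS_general {n : ℕ} {A : Type*} [Fintype A]
    (a : A → (Fin n → ℝ)) (b : A → ℝ)
    (K : Set (Fin n → ℝ)) (hKo : IsOpen K) :
    ∀ X ∈ sigma a b '' K, ∀ Y ∈ sigma a b '' K,
      comp X (-Y) ∈ sigma a b '' K := by
  rintro X ⟨v, hv, rfl⟩ Y ⟨w, -, rfl⟩
  have hray : Continuous fun t : ℝ => v + t • (v - w) := by fun_prop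
  have hK : ∀ᶠ t : ℝ in 𝓝[>] 0, v + t • (v - w) ∈ K :=
    nhdsWithin_le_nhds ((hray.continuousAt (x := 0)).preimage_mem_nhds (by simpa using hKo.mem_nhds hv))
  obtain ⟨t, hσ, htK⟩ := ((eventually_sigma_add_smul_sub a b v w).and hK).exists
  exact ⟨_, htK, hσ⟩

theorem realizable_FS {n : ℕ} {A : Type*} [Fintype A]
    (a : A → (Fin n → ℝ)) (b : A → ℝ) (ha : ∀ H, a H ≠ 0)
    (K : Set (Fin n → ℝ)) (hKo : IsOpen K) (hKc : Convex ℝ K) :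
    ∀ X ∈ sigma a b '' K, ∀ Y ∈ sigma a b '' K,
      comp X (-Y) ∈ sigma a b '' K :=
  realizable_FS_general a b K hKo
end

section
/- For v, w ∈ ℝⁿ with sign vectors X = σ_A(v) and Y = σ_A(w) with respect to a finite hyperplane arrangement A, there exists t₀ > 0 such that for all t ∈ (0, t₀), σ_A((1−t)v + t w) = X ∘ Y. -/
open Filter Topology

lemma sum_mul_sub_convexComb {ι R : Type*} [Fintype ι] [CommRing R] (a : ι → R) (b t : R)
    (v w : ι → R) :
    ∑ i, a i * ((1 - t) • v + t • w) i - b =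
      (1 - t) * (∑ i, a i * v i - b) + t * (∑ i, a i * w i - b) := by
  simp only [Pi.add_apply, Pi.smul_apply, smul_eq_mul, mul_add, Finset.sum_add_distrib,
    mul_left_comm _ (1 - t), mul_left_comm _ t, ← Finset.mul_sum]
  ring

section OrderedField

variable {𝕜 : Type*} [Field 𝕜] [LinearOrder 𝕜] [IsStrictOrderedRing 𝕜] [TopologicalSpace 𝕜]
  [OrderTopology 𝕜]

lemma eventually_sign_convexComb (x y : 𝕜) :
    ∀ᶠ t in 𝓝[>] 0, SignType.sign ((1 - t) * x + t * y) =
      if SignType.sign x = 0 then SignType.sign y else SignType.sign x := by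
  by_cases hx : x = 0
  · filter_upwards [self_mem_nhdsWithin] with t (ht : 0 < t)
    simp [hx, sign_mul, sign_pos ht]
  · rw [if_neg (sign_ne_zero.mpr hx)]
    have hcont : Continuous fun t : 𝕜 => (1 - t) * x + t * y := by fun_prop
    have hsign : Tendsto (fun t : 𝕜 => SignType.sign ((1 - t) * x + t * y)) (𝓝 0)
        (pure (SignType.sign x)) := by
      rw [← nhds_discrete]
      exact (continuousAt_sign_of_ne_zero hx).tendsto.comp (by simpa using hcont.tendsto 0)
    exact (tendsto_pure.mp hsign).filter_mono nhdsWithin_le_nhds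

lemma eventually_sign_convexComb_eq_comp {ι : Type*} [Finite ι] (x y : ι → 𝕜) :
    ∀ᶠ t in 𝓝[>] (0 : 𝕜), (fun i => SignType.sign ((1 - t) * x i + t * y i)) =
      comp (fun i => SignType.sign (x i)) (fun i => SignType.sign (y i)) := by
  simp only [funext_iff, comp]
  exact eventually_all.mpr fun i => eventually_sign_convexComb (x i) (y i)

end OrderedField

theorem sign_of_segment_general {n : ℕ} {A : Type*} [Fintype A]
    (a : A → (Fin n → ℝ)) (b : A → ℝ)
    (v w : Fin n → ℝ) :
    ∃ t₀ > (0 : ℝ), ∀ t : ℝ, 0 < t → t < t₀ →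
      sigma a b ((1 - t) • v + t • w) = comp (sigma a b v) (sigma a b w) := by
  have hall := eventually_sign_convexComb_eq_comp (fun H => ∑ i, a H i * v i - b H)
    (fun H => ∑ i, a H i * w i - b H)
  simp only [← sum_mul_sub_convexComb] at hall
  obtain ⟨t₀, ht₀, hsub⟩ := mem_nhdsGT_iff_exists_Ioo_subset.mp hall
  exact ⟨t₀, ht₀, fun t ht htt => hsub ⟨ht, htt⟩⟩

theorem sign_of_segment {n : ℕ} {A : Type*} [Fintype A]
    (a : A → (Fin n → ℝ)) (b : A → ℝ) (ha : ∀ H, a H ≠ 0)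
    (v w : Fin n → ℝ) :
    ∃ t₀ > (0 : ℝ), ∀ t : ℝ, 0 < t → t < t₀ →
      sigma a b ((1 - t) • v + t • w) = comp (sigma a b v) (sigma a b w) :=
  sign_of_segment_general a b v w
end
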